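/- arXiv:1503.07542 — 3 statements merged into one kernel-verified Lean document; each statement's English description precedes it below -/
import Mathlib

section
/- Let α_1,…,α_l be independent random variables where α_k is Gamma-distributed with shape parameter N (a positive integer) and scale parameter P_k > 0. Then for Z > 0, Pr{Σ_{k=1}^l α_k < Z} = (Z_1···Z_l)^N / Γ(lN+1) + O(1/P_min^{lN+1}) as P_min = min(P_1,…,P_l) → ∞, where Z_k = Z/P_k. -/
open MeasureTheory ProbabilityTheory Real



lemma beta_nat (p : ℕ) : ∀ (m : ℕ) (Z : ℝ), ∫ y in (0:ℝ)..Z, y ^ m * (Z - y) ^ p =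
    Z ^ (m + p + 1) * (m.factorial * p.factorial / (m + p + 1).factorial) := by
  induction p with
  | zero =>
    intro m Z
    simp only [pow_zero, mul_one, integral_pow]
    rw [show m + 0 + 1 = m + 1 from rfl, Nat.factorial_zero, Nat.factorial_succ]
    push_cast
    rw [zero_pow (by omega)]
    have h3 : (m:ℝ) + 1 ≠ 0 := by positivity
    field_simp
    ring
  | succ p ih =>
    intro m Z
    have hu : ∀ x ∈ Set.uIcc (0:ℝ) Z, HasDerivAt (fun y => (Z - y) ^ (p+1))
        (-((p+1) * (Z - x) ^ p)) x := by
      intro x _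
      have h1 : HasDerivAt (fun y : ℝ => Z - y) (-1) x := (hasDerivAt_id x).const_sub Z
      have := h1.pow (p+1)
      refine this.congr_deriv ?_
      push_cast; ring_nf
    have hv : ∀ x ∈ Set.uIcc (0:ℝ) Z, HasDerivAt (fun y => y ^ (m+1) / (m+1 : ℝ))
        (x ^ m) x := by
      intro x _
      have := (hasDerivAt_pow (m+1) x).div_const (m+1 : ℝ)
      refine this.congr_deriv ?_
      field_simp
      rw [Nat.add_sub_cancel]; push_cast; ring
    have hiu : IntervalIntegrable (fun x => -((p+1 : ℝ) * (Z - x) ^ p)) volume 0 Z :=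
      (Continuous.intervalIntegrable (by continuity) _ _)
    have hiv : IntervalIntegrable (fun x : ℝ => x ^ m) volume 0 Z :=
      (Continuous.intervalIntegrable (by continuity) _ _)
    have key := intervalIntegral.integral_mul_deriv_eq_deriv_mul hu hv hiu hiv
    have comm : ∫ y in (0:ℝ)..Z, y ^ m * (Z - y) ^ (p+1)
        = ∫ y in (0:ℝ)..Z, (Z - y) ^ (p+1) * y ^ m := by
      congr 1; ext y; ring
    rw [comm, key]
    simp only [sub_zero, sub_self, zero_pow (Nat.succ_ne_zero p), zero_mul, mul_zero, zero_sub,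
      zero_pow (Nat.succ_ne_zero m), zero_div]
    have : ∫ x in (0:ℝ)..Z, -((p+1:ℝ) * (Z - x) ^ p) * (x ^ (m+1) / (m+1 : ℝ))
        = -((p+1:ℝ)/(m+1:ℝ)) * ∫ x in (0:ℝ)..Z, x ^ (m+1) * (Z - x) ^ p := by
      rw [← intervalIntegral.integral_const_mul]
      congr 1; ext x; ring
    rw [this, ih (m+1) Z]
    have e1 : m + 1 + p + 1 = m + (p+1) + 1 := by ring
    rw [e1]
    have h2 : ((m + (p+1) + 1).factorial : ℝ) ≠ 0 := Nat.cast_ne_zero.mpr (Nat.factorial_ne_zero _)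
    have h3 : (m+1 : ℝ) ≠ 0 := by positivity
    rw [show (p+1).factorial = (p+1) * p.factorial from Nat.factorial_succ p,
      show (m+1).factorial = (m+1) * m.factorial from Nat.factorial_succ m]
    push_cast
    field_simp
def Aset (n : ℕ) (Z : ℝ) : Set (Fin n → ℝ) := {x | (∀ k, 0 ≤ x k) ∧ ∑ k, x k < Z}

lemma measurable_sum_fin (n : ℕ) : Measurable (fun x : Fin n → ℝ => ∑ k, x k) :=
  Finset.measurable_sum _ fun k _ => measurable_pi_apply k

lemma Aset_measurable (n : ℕ) (Z : ℝ) : MeasurableSet (Aset n Z) := by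
  have h1 : MeasurableSet {x : Fin n → ℝ | ∀ k, 0 ≤ x k} := by
    have : {x : Fin n → ℝ | ∀ k, 0 ≤ x k} = ⋂ k, (fun x => x k) ⁻¹' (Set.Ici 0) := by
      ext x; simp [Set.mem_iInter]
    rw [this]
    exact MeasurableSet.iInter fun k => (measurable_pi_apply k) measurableSet_Ici
  have h2 : MeasurableSet {x : Fin n → ℝ | ∑ k, x k < Z} :=
    (measurable_sum_fin n) measurableSet_Iio
  exact h1.inter h2

noncomputable def Kfun (N n : ℕ) (Z : ℝ) : ENNReal :=
  ∫⁻ x in Aset n Z, ∏ k, ENNReal.ofReal ((x k) ^ (N-1))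
    ∂(Measure.pi fun _ : Fin n => (volume : Measure ℝ))

lemma measurable_Kint (N n : ℕ) :
    Measurable (fun x : Fin n → ℝ => ∏ k, ENNReal.ofReal ((x k) ^ (N-1))) :=
  Finset.measurable_prod _ fun k _ =>
    (ENNReal.measurable_ofReal.comp ((measurable_pi_apply k).pow_const _))

lemma Kfun_of_nonpos {N n : ℕ} {Z : ℝ} (hZ : Z ≤ 0) : Kfun N n Z = 0 := by
  have : Aset n Z = ∅ := by
    ext x
    simp only [Aset, Set.mem_setOf_eq, Set.mem_empty_iff_false, iff_false, not_and]
    intro hx hs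
    exact absurd hs (not_lt.mpr (le_trans hZ (Finset.sum_nonneg fun k _ => hx k)))
  rw [Kfun, this, Measure.restrict_empty, lintegral_zero_measure]

lemma Kfun_formula (N : ℕ) (hN : 0 < N) : ∀ (n : ℕ) (Z : ℝ), 0 < Z →
    Kfun N n Z = ENNReal.ofReal
      (Z ^ (n*N) * ((N-1).factorial : ℝ) ^ n / ((n*N).factorial : ℝ)) := by
  intro n
  induction n with
  | zero =>
    intro Z hZ
    have hA : Aset 0 Z = Set.univ := by
      ext x
      simp [Aset, hZ]
    rw [Kfun, hA]
    simp [Measure.restrict_univ, Measure.pi_empty_univ]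
  | succ n ih =>
    intro Z hZ
    set e := MeasurableEquiv.piFinSuccAbove (fun _ : Fin (n+1) => ℝ) 0 with he
    have mp := (measurePreserving_piFinSuccAbove (fun _ : Fin (n+1) => (volume : Measure ℝ)) 0).symm
    set F : (Fin (n+1) → ℝ) → ENNReal := fun x => ∏ k, ENNReal.ofReal ((x k) ^ (N-1)) with hF
    have hFm : Measurable F := measurable_Kint N (n+1)
    have hind : Measurable ((Aset (n+1) Z).indicator F) := hFm.indicator (Aset_measurable _ _)
    have step1 : Kfun N (n+1) Z
        = ∫⁻ z : ℝ × (Fin n → ℝ), (Aset (n+1) Z).indicator F (e.symm z)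
            ∂((volume : Measure ℝ).prod (Measure.pi fun _ : Fin n => (volume : Measure ℝ))) := by
      rw [Kfun, ← lintegral_indicator (Aset_measurable _ _)]
      exact (mp.lintegral_comp hind).symm
    -- pointwise splitting
    have split : ∀ (y : ℝ) (x : Fin n → ℝ),
        (Aset (n+1) Z).indicator F (e.symm (y, x))
          = (Set.Ici (0:ℝ)).indicator (fun y => ENNReal.ofReal (y ^ (N-1))) y
            * (Aset n (Z - y)).indicator
                (fun x => ∏ j, ENNReal.ofReal ((x j) ^ (N-1))) x := by
      intro y x
      have hsymm : e.symm (y, x) = Fin.cons y x := by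
        simp [he, MeasurableEquiv.piFinSuccAbove_symm_apply, Fin.insertNthEquiv,
          Fin.insertNth_zero]
      rw [hsymm]
      have hmem : Fin.cons y x ∈ Aset (n+1) Z ↔ (y ∈ Set.Ici (0:ℝ)) ∧ x ∈ Aset n (Z - y) := by
        simp only [Aset, Set.mem_setOf_eq, Set.mem_Ici, Fin.forall_fin_succ,
          Fin.cons_zero, Fin.cons_succ, Fin.sum_univ_succ]
        constructor
        · rintro ⟨⟨h0, hs⟩, hsum⟩
          exact ⟨h0, ⟨hs, by linarith⟩⟩
        · rintro ⟨h0, ⟨hs, hsum⟩⟩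
          exact ⟨⟨h0, hs⟩, by linarith⟩
      have hFval : F (Fin.cons y x)
          = ENNReal.ofReal (y ^ (N-1)) * ∏ j, ENNReal.ofReal ((x j) ^ (N-1)) := by
        show (∏ k : Fin (n+1), ENNReal.ofReal ((Fin.cons y x : Fin (n+1) → ℝ) k ^ (N-1))) = _
        rw [Fin.prod_univ_succ]
        simp [Fin.cons_zero, Fin.cons_succ]
      by_cases h1 : y ∈ Set.Ici (0:ℝ)
      · by_cases h2 : x ∈ Aset n (Z - y)
        · rw [Set.indicator_of_mem (hmem.mpr ⟨h1, h2⟩), Set.indicator_of_mem h1,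
            Set.indicator_of_mem h2, hFval]
        · rw [Set.indicator_of_notMem (fun hc => h2 (hmem.mp hc).2),
            Set.indicator_of_notMem h2, mul_zero]
      · rw [Set.indicator_of_notMem (fun hc => h1 (hmem.mp hc).1),
          Set.indicator_of_notMem h1, zero_mul]
    have hGm : Measurable (fun x : Fin n → ℝ => ∏ j, ENNReal.ofReal ((x j) ^ (N-1))) :=
      measurable_Kint N n
    have step2 : Kfun N (n+1) Z
        = ∫⁻ y : ℝ, ((Set.Ici (0:ℝ)).indicator (fun y => ENNReal.ofReal (y ^ (N-1))) y)
            * Kfun N n (Z - y) := by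
      have hae : AEMeasurable (fun z : ℝ × (Fin n → ℝ) => (Aset (n+1) Z).indicator F (e.symm z))
          ((volume : Measure ℝ).prod (Measure.pi fun _ : Fin n => (volume : Measure ℝ))) :=
        (hind.comp e.symm.measurable).aemeasurable
      rw [step1, lintegral_prod _ hae]
      refine lintegral_congr fun y => ?_
      simp_rw [split y]
      rw [lintegral_const_mul _ (hGm.indicator (Aset_measurable _ _)),
        lintegral_indicator (Aset_measurable _ _)]
      rfl
    set c' : ℝ := ((N-1).factorial : ℝ) ^ n / ((n*N).factorial : ℝ) with hc'
    have hc'0 : 0 ≤ c' := by positivity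
    have step3 : ∀ y : ℝ,
        ((Set.Ici (0:ℝ)).indicator (fun y => ENNReal.ofReal (y ^ (N-1))) y) * Kfun N n (Z - y)
          = (Set.Ico (0:ℝ) Z).indicator
              (fun y => ENNReal.ofReal (y ^ (N-1) * (Z - y) ^ (n*N) * c')) y := by
      intro y
      by_cases h1 : 0 ≤ y
      · by_cases h2 : y < Z
        · rw [Set.indicator_of_mem (Set.mem_Ici.mpr h1),
            Set.indicator_of_mem (Set.mem_Ico.mpr ⟨h1, h2⟩),
            ih (Z - y) (by linarith)]
          rw [← ENNReal.ofReal_mul (by positivity)]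
          congr 1
          rw [hc']
          ring
        · rw [Set.indicator_of_notMem (fun hc => h2 (Set.mem_Ico.mp hc).2),
            Kfun_of_nonpos (by linarith), mul_zero]
      · rw [Set.indicator_of_notMem (fun hc => h1 (Set.mem_Ici.mp hc)),
          Set.indicator_of_notMem (fun hc => h1 (Set.mem_Ico.mp hc).1), zero_mul]
    have step4 : Kfun N (n+1) Z
        = ∫⁻ y in Set.Ico (0:ℝ) Z, ENNReal.ofReal (y ^ (N-1) * (Z - y) ^ (n*N) * c') := by
      rw [step2]
      simp_rw [step3]
      rw [lintegral_indicator measurableSet_Ico]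
    -- convert to a real interval integral
    have hcont : Continuous (fun y : ℝ => y ^ (N-1) * (Z - y) ^ (n*N) * c') :=
      ((continuous_pow (N-1)).mul ((continuous_const.sub continuous_id).pow (n*N))).mul
        continuous_const
    have step5 : Kfun N (n+1) Z
        = ENNReal.ofReal (∫ y in Set.Ioo (0:ℝ) Z, y ^ (N-1) * (Z - y) ^ (n*N) * c') := by
      rw [step4, ← setLIntegral_congr (Ioo_ae_eq_Ico (a := (0:ℝ)) (b := Z))]
      rw [← ofReal_integral_eq_lintegral_ofReal]
      · exact hcont.integrableOn_Icc.mono_set Set.Ioo_subset_Icc_self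
      · filter_upwards [ae_restrict_mem measurableSet_Ioo] with y hy
        have h1 : (0:ℝ) ≤ y := le_of_lt hy.1
        have h2 : (0:ℝ) ≤ Z - y := by linarith [hy.2]
        positivity
    have step6 : ∫ y in Set.Ioo (0:ℝ) Z, y ^ (N-1) * (Z - y) ^ (n*N) * c'
        = (∫ y in (0:ℝ)..Z, y ^ (N-1) * (Z - y) ^ (n*N)) * c' := by
      rw [← integral_Ioc_eq_integral_Ioo,
        ← intervalIntegral.integral_of_le hZ.le (f := fun y => y ^ (N-1) * (Z - y) ^ (n*N) * c')]
      exact intervalIntegral.integral_mul_const c' _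
    rw [step5, step6, beta_nat]
    congr 1
    have hexp : N - 1 + n*N + 1 = (n+1)*N := by
      cases N with
      | zero => exact absurd hN (lt_irrefl 0)
      | succ m => ring_nf; omega
    rw [hexp, hc']
    have hfac : ((n*N).factorial : ℝ) ≠ 0 := Nat.cast_ne_zero.mpr (Nat.factorial_ne_zero _)
    have hfac2 : (((n+1)*N).factorial : ℝ) ≠ 0 := Nat.cast_ne_zero.mpr (Nat.factorial_ne_zero _)
    rw [pow_succ]
    field_simp



lemma lintegral_fin_pi_prod : ∀ {n : ℕ} (f : Fin n → ℝ → ENNReal), (∀ i, Measurable (f i)) →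
    ∫⁻ x : Fin n → ℝ, ∏ i, f i (x i) ∂(Measure.pi fun _ => (volume : Measure ℝ))
      = ∏ i, ∫⁻ y, f i y := by
  intro n
  induction n with
  | zero =>
    intro f hf
    simp [Measure.pi_empty_univ]
  | succ n ih =>
    intro f hf
    have mp := (measurePreserving_piFinSuccAbove (fun _ : Fin (n+1) => (volume : Measure ℝ)) 0).symm
    have hmeas : Measurable fun x : Fin (n+1) → ℝ => ∏ i, f i (x i) :=
      Finset.measurable_prod _ fun i _ => (hf i).comp (measurable_pi_apply i)
    rw [← mp.lintegral_comp hmeas]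
    have : ∀ z : ℝ × (Fin n → ℝ),
        (∏ i, f i ((MeasurableEquiv.piFinSuccAbove (fun _ : Fin (n+1) => ℝ) 0).symm z i))
        = f 0 z.1 * ∏ j : Fin n, f (Fin.succ j) (z.2 j) := by
      intro z
      simp only [MeasurableEquiv.piFinSuccAbove_symm_apply, Fin.insertNthEquiv,
        Equiv.coe_fn_mk, Fin.insertNth_zero]
      rw [Fin.prod_univ_succ]
      simp [Fin.cons_zero, Fin.cons_succ]
    simp_rw [this]
    rw [lintegral_prod_mul (f := f 0) (g := fun x : Fin n → ℝ => ∏ j, f (Fin.succ j) (x j))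
      ((hf 0).aemeasurable)
      ((Finset.measurable_prod _ fun j _ => (hf _).comp (measurable_pi_apply j)).aemeasurable)]
    rw [ih _ (fun j => hf _), Fin.prod_univ_succ]

lemma pi_withDensity {n : ℕ} (f : Fin n → ℝ → ENNReal) (hf : ∀ i, Measurable (f i))
    [∀ i : Fin n, SigmaFinite ((volume : Measure ℝ).withDensity (f i))] :
    Measure.pi (fun i => (volume : Measure ℝ).withDensity (f i)) =
      (Measure.pi fun _ => (volume : Measure ℝ)).withDensity (fun x => ∏ i, f i (x i)) := by
  refine Measure.pi_eq fun s hs => ?_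
  rw [withDensity_apply _ (MeasurableSet.univ_pi hs)]
  have key : ∀ x : Fin n → ℝ, (Set.univ.pi s).indicator (fun x => ∏ i, f i (x i)) x
      = ∏ i, (s i).indicator (f i) (x i) := by
    intro x
    by_cases hx : x ∈ Set.univ.pi s
    · rw [Set.indicator_of_mem hx]
      exact Finset.prod_congr rfl fun i _ =>
        (Set.indicator_of_mem (hx i (Set.mem_univ i)) _).symm
    · rw [Set.indicator_of_notMem hx]
      have hex : ∃ i, x i ∉ s i := by simpa [Set.mem_univ_pi] using hx
      obtain ⟨i, hi⟩ := hex
      exact (Finset.prod_eq_zero (Finset.mem_univ i)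
        (Set.indicator_of_notMem hi _)).symm
  calc ∫⁻ x in Set.univ.pi s, ∏ i, f i (x i) ∂(Measure.pi fun _ => (volume : Measure ℝ))
      = ∫⁻ x, ∏ i, (s i).indicator (f i) (x i)
          ∂(Measure.pi fun _ => (volume : Measure ℝ)) := by
        rw [← lintegral_indicator (MeasurableSet.univ_pi hs)]
        exact lintegral_congr key
    _ = ∏ i, ∫⁻ y, (s i).indicator (f i) y :=
        lintegral_fin_pi_prod _ fun i => (hf i).indicator (hs i)
    _ = ∏ i, ((volume : Measure ℝ).withDensity (f i)) (s i) := by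
        refine Finset.prod_congr rfl fun i _ => ?_
        rw [lintegral_indicator (hs i), withDensity_apply _ (hs i)]


open ProbabilityTheory Real

/-- For independent `α_k ~ Gamma(N, scale P_k)` (modeled by the product of
gamma measures with shape `N` and rate `1/P_k`) and `Z > 0`,
`Pr{∑ α_k < Z} = (Z_1⋯Z_l)^N / Γ(lN+1) + O(1/P_min^{lN+1})` as `P_min → ∞`,
where `Z_k = Z/P_k`. -/
theorem stmt4 (N l : ℕ) (hN : 0 < N) (hl : 0 < l) (Z : ℝ) (hZ : 0 < Z) :
    ∃ C P₀ : ℝ, 0 < C ∧ 0 < P₀ ∧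
      ∀ P : Fin l → ℝ, (∀ k, 0 < P k) → (∀ k, P₀ ≤ P k) →
        |(Measure.pi (fun k => gammaMeasure (N : ℝ) (1 / P k))
              {x : Fin l → ℝ | ∑ k, x k < Z}).toReal -
            (∏ k, Z / P k) ^ N / Real.Gamma ((l * N : ℕ) + 1)| ≤
          C / (⨅ k, P k) ^ (l * N + 1) := by
  classical
  refine ⟨Z ^ (l*N+1) / ((l*N).factorial : ℝ), max 1 (2*Z), by positivity,
    lt_of_lt_of_le one_pos (le_max_left _ _), ?_⟩
  intro P hP hP0
  haveI : Nonempty (Fin l) := ⟨⟨0, hl⟩⟩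
  set Pm := ⨅ k, P k with hPmdef
  obtain ⟨k₀, hk₀⟩ := exists_eq_ciInf_of_finite (f := P)
  have hPm_ge : max 1 (2*Z) ≤ Pm := by rw [hPmdef, ← hk₀]; exact hP0 k₀
  have hPm1 : (1:ℝ) ≤ Pm := le_trans (le_max_left _ _) hPm_ge
  have hPm2Z : 2*Z ≤ Pm := le_trans (le_max_right _ _) hPm_ge
  have hPm_pos : 0 < Pm := lt_of_lt_of_le one_pos hPm1
  have hPm_le : ∀ k, Pm ≤ P k := fun k => ciInf_le (Set.Finite.bddBelow (Set.finite_range P)) k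
  -- probability & sigma-finiteness instances
  have hprob : ∀ k, IsProbabilityMeasure
      ((volume : Measure ℝ).withDensity (gammaPDF (N:ℝ) (1/P k))) := fun k =>
    isProbabilityMeasure_gammaMeasure (by exact_mod_cast hN) (one_div_pos.mpr (hP k))
  haveI : ∀ k : Fin l, SigmaFinite ((volume : Measure ℝ).withDensity (gammaPDF (N:ℝ) (1/P k))) :=
    fun k => haveI := hprob k; inferInstance
  have hpi : Measure.pi (fun k => gammaMeasure (N : ℝ) (1 / P k)) =
      (Measure.pi fun _ : Fin l => (volume : Measure ℝ)).withDensity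
        (fun x => ∏ k, gammaPDF (N : ℝ) (1 / P k) (x k)) :=
    pi_withDensity _ (fun k => ENNReal.measurable_ofReal.comp (measurable_gammaPDFReal _ _))
  set S : Set (Fin l → ℝ) := {x | ∑ k, x k < Z} with hSdef
  have hS : MeasurableSet S := (measurable_sum_fin l) measurableSet_Iio
  have hA : MeasurableSet (Aset l Z) := Aset_measurable l Z
  have hAS : Aset l Z ⊆ S := fun x hx => hx.2
  set G : (Fin l → ℝ) → ENNReal := fun x => ∏ k, gammaPDF (N : ℝ) (1 / P k) (x k) with hGdef
  have hGm : Measurable G :=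
    Finset.measurable_prod _ fun k _ =>
      (ENNReal.measurable_ofReal.comp (measurable_gammaPDFReal _ _)).comp (measurable_pi_apply k)
  -- μ S = ∫⁻ over Aset
  have hμS : Measure.pi (fun k => gammaMeasure (N : ℝ) (1 / P k)) S
      = ∫⁻ x in Aset l Z, G x ∂(Measure.pi fun _ : Fin l => (volume : Measure ℝ)) := by
    rw [hpi, withDensity_apply _ hS]
    have : ∫⁻ x in S, G x ∂(Measure.pi fun _ : Fin l => (volume : Measure ℝ))
        = (∫⁻ x in Aset l Z, G x ∂(Measure.pi fun _ : Fin l => (volume : Measure ℝ)))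
          + ∫⁻ x in S \ Aset l Z, G x ∂(Measure.pi fun _ : Fin l => (volume : Measure ℝ)) := by
      rw [← lintegral_union (hS.diff hA) disjoint_sdiff_self_right,
        Set.union_diff_cancel hAS]
    rw [this]
    have hzero : ∫⁻ x in S \ Aset l Z, G x
        ∂(Measure.pi fun _ : Fin l => (volume : Measure ℝ)) = 0 := by
      rw [setLIntegral_congr_fun (hS.diff hA) (fun x hx => ?_), lintegral_zero]
      obtain ⟨k, hk⟩ : ∃ k, x k < 0 := by
        by_contra hc
        push_neg at hc
        exact hx.2 ⟨hc, hx.1⟩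
      exact Finset.prod_eq_zero (Finset.mem_univ k) (gammaPDF_of_neg hk)
    rw [hzero, add_zero]
  -- pointwise form of the density on Aset
  set lam : Fin l → ℝ := fun k => 1 / P k with hlam
  have hlam_pos : ∀ k, 0 < lam k := fun k => one_div_pos.mpr (hP k)
  have hlam_le : ∀ k, lam k ≤ 1 / Pm := fun k => one_div_le_one_div_of_le hPm_pos (hPm_le k)
  set creal : ℝ := ∏ k, (lam k ^ N / Real.Gamma (N:ℝ)) with hcreal
  have hΓN_pos : 0 < Real.Gamma (N:ℝ) := Real.Gamma_pos_of_pos (by exact_mod_cast hN)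
  have hcreal_nonneg : 0 ≤ creal :=
    Finset.prod_nonneg fun k _ => div_nonneg (pow_nonneg (hlam_pos k).le _) hΓN_pos.le
  have hpdf : ∀ x ∈ Aset l Z, G x
      = ENNReal.ofReal (creal * (∏ k, (x k) ^ (N-1)) * Real.exp (-(∑ k, lam k * x k))) := by
    intro x hx
    have hx0 : ∀ k, 0 ≤ x k := hx.1
    have hfac : ∀ k, gammaPDF (N:ℝ) (lam k) (x k)
        = ENNReal.ofReal ((lam k ^ N / Real.Gamma (N:ℝ)) * (x k) ^ (N-1)
            * Real.exp (-(lam k * x k))) := by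
      intro k
      rw [gammaPDF_of_nonneg (hx0 k)]
      congr 1
      rw [Real.rpow_natCast, show (N:ℝ) - 1 = ((N - 1 : ℕ) : ℝ) by
          rw [Nat.cast_sub hN]; norm_num, Real.rpow_natCast]
    rw [hGdef]
    simp only []
    calc (∏ k, gammaPDF (N:ℝ) (1 / P k) (x k))
        = ∏ k, ENNReal.ofReal ((lam k ^ N / Real.Gamma (N:ℝ)) * (x k) ^ (N-1)
            * Real.exp (-(lam k * x k))) := Finset.prod_congr rfl fun k _ => hfac k
      _ = ENNReal.ofReal (∏ k, ((lam k ^ N / Real.Gamma (N:ℝ)) * (x k) ^ (N-1)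
            * Real.exp (-(lam k * x k)))) := by
          rw [ENNReal.ofReal_prod_of_nonneg]
          intro k _
          exact mul_nonneg (mul_nonneg (div_nonneg (pow_nonneg (hlam_pos k).le _) hΓN_pos.le)
            (pow_nonneg (hx0 k) _)) (Real.exp_nonneg _)
      _ = ENNReal.ofReal (creal * (∏ k, (x k) ^ (N-1))
            * Real.exp (-(∑ k, lam k * x k))) := by
          congr 1
          rw [Finset.prod_mul_distrib, Finset.prod_mul_distrib, ← Real.exp_sum]
          rw [hcreal]
          congr 1
          rw [← Finset.sum_neg_distrib]
  -- pointwise bounds on Aset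
  have hexp_bounds : ∀ x ∈ Aset l Z,
      1 - Z / Pm ≤ Real.exp (-(∑ k, lam k * x k)) ∧
      Real.exp (-(∑ k, lam k * x k)) ≤ 1 := by
    intro x hx
    have hx0 : ∀ k, 0 ≤ x k := hx.1
    have hsum_nonneg : 0 ≤ ∑ k, lam k * x k :=
      Finset.sum_nonneg fun k _ => mul_nonneg (hlam_pos k).le (hx0 k)
    have hsum_le : ∑ k, lam k * x k ≤ Z / Pm := by
      have h1 : ∑ k, lam k * x k ≤ ∑ k, (1/Pm) * x k :=
        Finset.sum_le_sum fun k _ => mul_le_mul_of_nonneg_right (hlam_le k) (hx0 k)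
      have h2 : ∑ k, (1/Pm) * x k = (1/Pm) * ∑ k, x k := by rw [Finset.mul_sum]
      have h3 : (1/Pm) * ∑ k, x k ≤ (1/Pm) * Z :=
        mul_le_mul_of_nonneg_left hx.2.le (by positivity)
      calc ∑ k, lam k * x k ≤ (1/Pm) * ∑ k, x k := h2 ▸ h1
        _ ≤ (1/Pm) * Z := h3
        _ = Z / Pm := by ring
    constructor
    · have := Real.add_one_le_exp (-(∑ k, lam k * x k))
      linarith
    · calc Real.exp (-(∑ k, lam k * x k)) ≤ Real.exp 0 :=
        Real.exp_le_exp.mpr (by linarith)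
      _ = 1 := Real.exp_zero
  -- the Dirichlet integral value
  set Dval : ℝ := Z ^ (l*N) * ((N-1).factorial : ℝ) ^ l / ((l*N).factorial : ℝ) with hDval
  have hDval_nonneg : 0 ≤ Dval := by positivity
  have hK : Kfun N l Z = ENNReal.ofReal Dval := Kfun_formula N hN l Z hZ
  -- upper and lower integral bounds
  have hupper : Measure.pi (fun k => gammaMeasure (N : ℝ) (1 / P k)) S
      ≤ ENNReal.ofReal (creal * Dval) := by
    rw [hμS]
    calc ∫⁻ x in Aset l Z, G x ∂(Measure.pi fun _ : Fin l => (volume : Measure ℝ))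
        ≤ ∫⁻ x in Aset l Z, ENNReal.ofReal (creal * ∏ k, (x k) ^ (N-1))
            ∂(Measure.pi fun _ : Fin l => (volume : Measure ℝ)) := by
          refine setLIntegral_mono ?_ ?_
          · exact ENNReal.measurable_ofReal.comp
              (measurable_const.mul (Finset.measurable_prod _ fun k _ =>
                (measurable_pi_apply k).pow_const _))
          · intro x hx
            rw [hpdf x hx]
            refine ENNReal.ofReal_le_ofReal ?_
            have hx0 : ∀ k, 0 ≤ x k := hx.1
            have hprod_nonneg : 0 ≤ ∏ k, (x k) ^ (N-1) :=
              Finset.prod_nonneg fun k _ => pow_nonneg (hx0 k) _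
            have := (hexp_bounds x hx).2
            calc creal * (∏ k, (x k) ^ (N-1)) * Real.exp (-(∑ k, lam k * x k))
                ≤ creal * (∏ k, (x k) ^ (N-1)) * 1 :=
                  mul_le_mul_of_nonneg_left this (by positivity)
              _ = creal * ∏ k, (x k) ^ (N-1) := by ring
      _ = ENNReal.ofReal (creal * Dval) := by
          have : ∀ x ∈ Aset l Z, ENNReal.ofReal (creal * ∏ k, (x k) ^ (N-1))
              = ENNReal.ofReal creal * ∏ k, ENNReal.ofReal ((x k) ^ (N-1)) := by
            intro x hx
            rw [ENNReal.ofReal_mul hcreal_nonneg,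
              ENNReal.ofReal_prod_of_nonneg (fun k _ => pow_nonneg (hx.1 k) _)]
          rw [setLIntegral_congr_fun hA this,
            lintegral_const_mul _ (measurable_Kint N l)]
          rw [show (∫⁻ x in Aset l Z, ∏ k, ENNReal.ofReal ((x k) ^ (N-1))
              ∂(Measure.pi fun _ : Fin l => (volume : Measure ℝ))) = Kfun N l Z from rfl,
            hK, ← ENNReal.ofReal_mul hcreal_nonneg]
  have hZPm : Z / Pm ≤ 1/2 := by
    rw [div_le_div_iff₀ hPm_pos two_pos]
    linarith
  have h1ZPm : 0 ≤ 1 - Z / Pm := by linarith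
  have hlower : ENNReal.ofReal ((1 - Z / Pm) * (creal * Dval))
      ≤ Measure.pi (fun k => gammaMeasure (N : ℝ) (1 / P k)) S := by
    rw [hμS]
    calc ENNReal.ofReal ((1 - Z / Pm) * (creal * Dval))
        = ∫⁻ x in Aset l Z, ENNReal.ofReal ((1 - Z/Pm) * creal * ∏ k, (x k) ^ (N-1))
            ∂(Measure.pi fun _ : Fin l => (volume : Measure ℝ)) := by
          have : ∀ x ∈ Aset l Z, ENNReal.ofReal ((1 - Z/Pm) * creal * ∏ k, (x k) ^ (N-1))
              = ENNReal.ofReal ((1 - Z/Pm) * creal)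
                  * ∏ k, ENNReal.ofReal ((x k) ^ (N-1)) := by
            intro x hx
            rw [ENNReal.ofReal_mul (mul_nonneg h1ZPm hcreal_nonneg),
              ENNReal.ofReal_prod_of_nonneg (fun k _ => pow_nonneg (hx.1 k) _)]
          rw [setLIntegral_congr_fun hA this,
            lintegral_const_mul _ (measurable_Kint N l),
            show (∫⁻ x in Aset l Z, ∏ k, ENNReal.ofReal ((x k) ^ (N-1))
              ∂(Measure.pi fun _ : Fin l => (volume : Measure ℝ))) = Kfun N l Z from rfl,
            hK, ← ENNReal.ofReal_mul (mul_nonneg h1ZPm hcreal_nonneg)]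
          congr 1
          ring
      _ ≤ ∫⁻ x in Aset l Z, G x ∂(Measure.pi fun _ : Fin l => (volume : Measure ℝ)) := by
          refine setLIntegral_mono (hGm) ?_
          intro x hx
          rw [hpdf x hx]
          refine ENNReal.ofReal_le_ofReal ?_
          have hx0 : ∀ k, 0 ≤ x k := hx.1
          have hprod_nonneg : 0 ≤ ∏ k, (x k) ^ (N-1) :=
            Finset.prod_nonneg fun k _ => pow_nonneg (hx0 k) _
          have hlo := (hexp_bounds x hx).1
          calc (1 - Z/Pm) * creal * ∏ k, (x k) ^ (N-1)
              = creal * (∏ k, (x k) ^ (N-1)) * (1 - Z/Pm) := by ring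
            _ ≤ creal * (∏ k, (x k) ^ (N-1)) * Real.exp (-(∑ k, lam k * x k)) :=
                mul_le_mul_of_nonneg_left hlo (by positivity)
  -- convert to reals
  set μS := Measure.pi (fun k => gammaMeasure (N : ℝ) (1 / P k)) S with hμSdef
  have hμS_ne_top : μS ≠ ⊤ :=
    ne_top_of_le_ne_top ENNReal.ofReal_ne_top hupper
  have hub : μS.toReal ≤ creal * Dval :=
    ENNReal.toReal_le_of_le_ofReal (mul_nonneg hcreal_nonneg hDval_nonneg) hupper
  have hlb : (1 - Z / Pm) * (creal * Dval) ≤ μS.toReal :=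
    (ENNReal.ofReal_le_iff_le_toReal hμS_ne_top).mp hlower
  -- identify the main term
  have hmain : (∏ k, Z / P k) ^ N / Real.Gamma ((l * N : ℕ) + 1) = creal * Dval := by
    have hΓ1 : Real.Gamma (((l*N : ℕ) : ℝ) + 1) = ((l*N).factorial : ℝ) :=
      Real.Gamma_nat_eq_factorial _
    have hΓN : Real.Gamma (N:ℝ) = ((N-1).factorial : ℝ) := by
      have h := Real.Gamma_nat_eq_factorial (N-1)
      rw [Nat.cast_sub hN] at h
      norm_num at h
      exact h
    have hprod1 : (∏ k, Z / P k) ^ N = Z ^ (l*N) * ∏ k, lam k ^ N := by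
      have h0 : ∏ k, Z / P k = Z ^ l * ∏ k, lam k := by
        calc ∏ k, Z / P k = ∏ k : Fin l, (Z * lam k) :=
              Finset.prod_congr rfl fun k _ => by rw [hlam]; ring
          _ = (∏ _k : Fin l, Z) * ∏ k, lam k := Finset.prod_mul_distrib
          _ = Z ^ l * ∏ k, lam k := by rw [Finset.prod_const, Finset.card_fin]
      rw [h0, mul_pow, ← pow_mul, ← Finset.prod_pow]
    have hcreal_eq : creal = (∏ k, lam k ^ N) / ((N-1).factorial : ℝ) ^ l := by
      rw [hcreal, Finset.prod_div_distrib, Finset.prod_const, hΓN, Finset.card_fin]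
    rw [hΓ1, hprod1, hcreal_eq, hDval]
    have hfacN : (((N-1).factorial : ℝ)) ≠ 0 := Nat.cast_ne_zero.mpr (Nat.factorial_ne_zero _)
    have hfacl : (((l*N).factorial : ℝ)) ≠ 0 := Nat.cast_ne_zero.mpr (Nat.factorial_ne_zero _)
    field_simp
  rw [hmain]
  -- final bound
  have hm_le : creal * Dval ≤ Z ^ (l*N) * (1/Pm) ^ (l*N) / ((l*N).factorial : ℝ) := by
    have hcreal_le : creal ≤ (1/Pm) ^ (l*N) / ((N-1).factorial : ℝ) ^ l := by
      have hstep : ∏ k : Fin l, (lam k ^ N / Real.Gamma (N:ℝ))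
          ≤ ∏ _k : Fin l, ((1/Pm) ^ N / Real.Gamma (N:ℝ)) := by
        refine Finset.prod_le_prod
          (fun k _ => div_nonneg (pow_nonneg (hlam_pos k).le _) hΓN_pos.le) fun k _ => ?_
        exact (div_le_div_iff_of_pos_right hΓN_pos).mpr (pow_le_pow_left₀ (hlam_pos k).le (hlam_le k) N)
      calc creal ≤ ∏ _k : Fin l, ((1/Pm) ^ N / Real.Gamma (N:ℝ)) := hstep
        _ = (1/Pm) ^ (l*N) / Real.Gamma (N:ℝ) ^ l := by
            rw [Finset.prod_div_distrib, Finset.prod_const, Finset.prod_const,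
              Finset.card_fin, ← pow_mul, Nat.mul_comm N l]
        _ = (1/Pm) ^ (l*N) / ((N-1).factorial : ℝ) ^ l := by
            congr 2
            have h := Real.Gamma_nat_eq_factorial (N-1)
            rw [Nat.cast_sub hN] at h
            norm_num at h
            exact h
    calc creal * Dval ≤ ((1/Pm) ^ (l*N) / ((N-1).factorial : ℝ) ^ l) * Dval :=
        mul_le_mul_of_nonneg_right hcreal_le hDval_nonneg
      _ = Z ^ (l*N) * (1/Pm) ^ (l*N) / ((l*N).factorial : ℝ) := by
          rw [hDval]
          have hfacN : (((N-1).factorial : ℝ)) ≠ 0 := Nat.cast_ne_zero.mpr (Nat.factorial_ne_zero _)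
          field_simp
  have habs : |μS.toReal - creal * Dval| ≤ (Z/Pm) * (creal * Dval) := by
    rw [abs_le]
    constructor
    · have : (1 - Z / Pm) * (creal * Dval) = creal * Dval - (Z/Pm) * (creal * Dval) := by ring
      rw [this] at hlb
      linarith
    · have hZPm0 : 0 ≤ (Z/Pm) * (creal * Dval) := by positivity
      linarith
  calc |μS.toReal - creal * Dval| ≤ (Z/Pm) * (creal * Dval) := habs
    _ ≤ (Z/Pm) * (Z ^ (l*N) * (1/Pm) ^ (l*N) / ((l*N).factorial : ℝ)) :=
        mul_le_mul_of_nonneg_left hm_le (by positivity)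
    _ = Z ^ (l*N+1) / ((l*N).factorial : ℝ) / Pm ^ (l*N+1) := by
        rw [pow_succ, one_div, inv_pow]
        field_simp
        ring
end

section
/- For the geometric program: minimize W_L/(P_1···P_L)^N subject to P_1 + Σ_{l=2}^L P_l W_{l−1}/(P_1···P_{l−1})^N ≤ Ē over positive P_l, the point defined by P_1* = Ē N (N+1)^{L−1} / ((N+1)^L − 1) and P_i* = (W_{i−2}/(W_{i−1}(1+N))) (P_{i−1}*)^{N+1} for 2 ≤ i ≤ L satisfies the KKT conditions: the constraint holds with equality and the gradient of the objective plus λ* times the gradient of the constraint vanishes for λ* = N W_L / (W_{L−1} (P_L*)^{N+1}). -/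
open Finset

/-- Objective `W_L / (P_1 ⋯ P_L)^N` (0-indexed). -/
noncomputable def gpObj (L N : ℕ) (W : ℕ → ℝ) (P : Fin L → ℝ) : ℝ :=
  W L / (∏ l, P l) ^ N

/-- Energy expression `P_1 + ∑_{l=2}^L P_l W_{l-1}/(P_1 ⋯ P_{l-1})^N` (0-indexed,
`W 0 = 1`). -/
noncomputable def gpConstr (L N : ℕ) (W : ℕ → ℝ) (P : Fin L → ℝ) : ℝ :=
  ∑ l, P l * W l.val / (∏ k ∈ Finset.Iio l, P k) ^ N

/-- Closed-form candidate solution (0-indexed):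
`P* 0 = Ē N (N+1)^{L-1} / ((N+1)^L - 1)` and
`P* j = (W_{j-1}/(W_j (1+N))) (P*_{j-1})^{N+1}` for `1 ≤ j ≤ L-1`. -/
noncomputable def gpPstar (L N : ℕ) (W : ℕ → ℝ) (E : ℝ) : ℕ → ℝ
  | 0 => E * N * ((N : ℝ) + 1) ^ (L - 1) / (((N : ℝ) + 1) ^ L - 1)
  | j + 1 => W j / (W (j + 1) * (1 + (N : ℝ))) * (gpPstar L N W E j) ^ (N + 1)

lemma prodIioFin {L : ℕ} (l : Fin L) (f : ℕ → ℝ) :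
    ∏ k ∈ Finset.Iio l, f k.val = ∏ k ∈ Finset.range l.val, f k := by
  rw [← Nat.Iio_eq_range, ← Fin.map_valEmbedding_Iio, Finset.prod_map]
  rfl

lemma hasDerivAt_pow_inv (n : ℕ) (a : ℝ) (ha : a ≠ 0) :
    HasDerivAt (fun x : ℝ => (x ^ n)⁻¹) (-(n:ℝ) * (a ^ (n+1))⁻¹) a := by
  have h := hasDerivAt_zpow (-(n:ℤ)) a (Or.inl ha)
  have hf : (fun x : ℝ => x ^ (-(n:ℤ))) = fun x : ℝ => (x ^ n)⁻¹ := by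
    funext x; rw [zpow_neg, zpow_natCast]
  rw [hf] at h
  convert h using 1
  · rfl
  push_cast
  rw [show (-(n:ℤ) - 1) = -((n:ℤ)+1) by ring, zpow_neg]
  norm_cast

lemma gpPos (L N : ℕ) (hL : 1 ≤ L) (hN : 1 ≤ N) (W : ℕ → ℝ) (hW0 : W 0 = 1)
    (hW : ∀ l, 1 ≤ l → l ≤ L → 0 < W l) (E : ℝ) (hE : 0 < E) :
    ∀ m, m < L → 0 < gpPstar L N W E m := by
  have hN' : (0:ℝ) < N := by exact_mod_cast hN
  have hs : (1:ℝ) < (N:ℝ) + 1 := by linarith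
  intro m
  induction m with
  | zero =>
    intro _
    show 0 < E * N * ((N : ℝ) + 1) ^ (L - 1) / (((N : ℝ) + 1) ^ L - 1)
    have h1 : (1:ℝ) < ((N:ℝ)+1) ^ L := one_lt_pow₀ hs (by omega)
    have h2 : (0:ℝ) < ((N:ℝ)+1) ^ (L-1) := by positivity
    have : 0 < E * N * ((N : ℝ) + 1) ^ (L - 1) := by positivity
    exact div_pos this (by linarith)
  | succ j ih =>
    intro hj
    have hpj := ih (by omega)
    have hWj : 0 < W j := by
      rcases Nat.eq_zero_or_pos j with h | h
      · subst h; rw [hW0]; norm_num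
      · exact hW j h (by omega)
    have hWj1 : 0 < W (j+1) := hW (j+1) (by omega) (by omega)
    show 0 < W j / (W (j + 1) * (1 + (N : ℝ))) * (gpPstar L N W E j) ^ (N + 1)
    positivity

lemma gpFormula (L N : ℕ) (hL : 1 ≤ L) (hN : 1 ≤ N) (W : ℕ → ℝ) (hW0 : W 0 = 1)
    (hW : ∀ l, 1 ≤ l → l ≤ L → 0 < W l) (E : ℝ) (hE : 0 < E) :
    ∀ m, m < L → W m * gpPstar L N W E m /
        (∏ k ∈ Finset.range m, gpPstar L N W E k) ^ N
      = gpPstar L N W E 0 * (((N:ℝ)+1)⁻¹) ^ m := by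
  have hN' : (0:ℝ) < N := by exact_mod_cast hN
  have hpos := gpPos L N hL hN W hW0 hW E hE
  intro m
  induction m with
  | zero => intro _; simp [hW0]
  | succ j ih =>
    intro hj
    have hpj := hpos j (by omega)
    have hWj : 0 < W j := by
      rcases Nat.eq_zero_or_pos j with h | h
      · subst h; rw [hW0]; norm_num
      · exact hW j h (by omega)
    have hWj1 : 0 < W (j+1) := hW (j+1) (by omega) (by omega)
    have hq : (0:ℝ) < ∏ k ∈ Finset.range j, gpPstar L N W E k :=
      Finset.prod_pos fun k hk => hpos k (by simp at hk; omega)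
    have hrec : gpPstar L N W E (j+1)
        = W j / (W (j + 1) * (1 + (N : ℝ))) * (gpPstar L N W E j) ^ (N + 1) := rfl
    rw [Finset.prod_range_succ, hrec]
    have key : W (j+1) * (W j / (W (j + 1) * (1 + (N:ℝ))) * gpPstar L N W E j ^ (N + 1)) /
        ((∏ k ∈ Finset.range j, gpPstar L N W E k) * gpPstar L N W E j) ^ N
        = (W j * gpPstar L N W E j / (∏ k ∈ Finset.range j, gpPstar L N W E k) ^ N)
          * ((N:ℝ)+1)⁻¹ := by
      rw [mul_pow, pow_succ]
      field_simp
      ring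
    rw [key, ih (by omega), pow_succ]
    ring

/-- The closed-form point satisfies the KKT conditions: the energy
constraint holds with equality, and for `λ* = N W_L / (W_{L-1} (P_L*)^{N+1})` the
Lagrangian `obj + λ*·constr` is stationary in each coordinate. -/
theorem stmt11 (L N : ℕ) (hL : 1 ≤ L) (hN : 1 ≤ N) (W : ℕ → ℝ) (hW0 : W 0 = 1)
    (hW : ∀ l, 1 ≤ l → l ≤ L → 0 < W l) (E : ℝ) (hE : 0 < E) :
    gpConstr L N W (fun l => gpPstar L N W E l.val) = E ∧
      ∀ l : Fin L,
        HasDerivAt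
          (fun x : ℝ =>
            gpObj L N W (Function.update (fun i : Fin L => gpPstar L N W E i.val) l x) +
              (N * W L / (W (L - 1) * (gpPstar L N W E (L - 1)) ^ (N + 1))) *
                gpConstr L N W
                  (Function.update (fun i : Fin L => gpPstar L N W E i.val) l x))
          0 (gpPstar L N W E l.val) := by
  have hN' : (0:ℝ) < N := by exact_mod_cast hN
  have hpos := gpPos L N hL hN W hW0 hW E hE
  have hform := gpFormula L N hL hN W hW0 hW E hE
  set p : ℕ → ℝ := gpPstar L N W E with hp
  set r : ℝ := ((N:ℝ)+1)⁻¹ with hr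
  obtain ⟨M, rfl⟩ : ∃ M, L = M + 1 := ⟨L - 1, by omega⟩
  constructor
  · -- constraint
    have step1 : gpConstr (M+1) N W (fun l => p l.val)
        = ∑ m ∈ Finset.range (M+1), p m * W m / (∏ k ∈ Finset.range m, p k) ^ N := by
      unfold gpConstr
      rw [← Fin.sum_univ_eq_sum_range
        (fun m => p m * W m / (∏ k ∈ Finset.range m, p k) ^ N) (M+1)]
      exact Finset.sum_congr rfl fun l _ => by rw [prodIioFin]
    rw [step1]
    have step2 : ∀ m ∈ Finset.range (M+1),
        p m * W m / (∏ k ∈ Finset.range m, p k) ^ N = p 0 * r ^ m := by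
      intro m hm
      rw [mul_comm (p m) (W m)]
      exact hform m (by simpa using hm)
    rw [Finset.sum_congr rfl step2, ← Finset.mul_sum,
      geom_sum_eq (by
        have : r < 1 := by rw [hr, inv_lt_one_iff₀]; right; push_cast; linarith
        exact ne_of_lt this)]
    have hp0 : p 0 = E * N * ((N:ℝ)+1) ^ M / (((N:ℝ)+1) ^ (M+1) - 1) := by
      show gpPstar (M+1) N W E 0 = _
      simp [gpPstar]
    rw [hp0, hr]
    -- pure algebra
    set s : ℝ := (N:ℝ) + 1 with hs
    have hs1 : (1:ℝ) < s := by simp [hs]; positivity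
    have hs0 : s ≠ 0 := by linarith
    have h1 : s ^ (M+1) - 1 ≠ 0 := by
      have : (1:ℝ) < s ^ (M+1) := one_lt_pow₀ hs1 (by omega)
      linarith
    have h2 : s⁻¹ - 1 ≠ 0 := by
      have : s⁻¹ < 1 := by rw [inv_lt_one_iff₀]; right; exact hs1
      linarith
    have hNne : (N:ℝ) ≠ 0 := ne_of_gt hN'
    have key : ((s⁻¹)^(M+1) - 1)/(s⁻¹ - 1) = (s^(M+1)-1)/((N:ℝ) * s^M) := by
      rw [div_eq_div_iff h2 (by positivity)]
      have hsp : s ^ (M+1) ≠ 0 := pow_ne_zero _ hs0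
      rw [inv_pow]
      field_simp
      ring_nf
      rw [hs]; ring
    rw [key, div_mul_div_comm, div_eq_iff (by positivity)]
    ring
  · intro l
    simp only [Nat.add_sub_cancel]
    have ha : 0 < p l.val := hpos _ l.isLt
    have ha0 : p l.val ≠ 0 := ne_of_gt ha
    set a : ℝ := p l.val with hadef
    set pf : Fin (M+1) → ℝ := fun i => p i.val with hpf
    set q : ℕ → ℝ := fun m => ∏ k ∈ Finset.range m, p k with hqdef
    have hqpos : ∀ m, m ≤ M+1 → 0 < q m := by
      intro m hm
      exact Finset.prod_pos fun k hk => hpos k (by simp at hk; omega)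
    set lam : ℝ := (N:ℝ) * W (M+1) / (W M * p M ^ (N+1)) with hlam
    set Bl : ℝ := W l.val / q l.val ^ N with hBldef
    set K : ℝ := -(N:ℝ) * p 0 / a with hK
    set C : ℝ := ∏ i ∈ Finset.univ \ {l}, pf i with hCdef
    set d : Fin (M+1) → ℝ := fun m =>
      (if m = l then Bl else 0) + (if l.val < m.val then K * r ^ m.val else 0) with hd
    have hNne : (N:ℝ) ≠ 0 := ne_of_gt hN'
    -- objective derivative
    have hCpos : 0 < C := Finset.prod_pos fun i _ => hpos i.val i.isLt
    have hCa : C * a = q (M+1) := by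
      rw [hCdef, hadef, hpf, ← Finset.erase_eq]
      rw [Finset.prod_erase_mul _ _ (Finset.mem_univ l)]
      exact Fin.prod_univ_eq_prod_range (fun k => p k) (M+1)
    have hobjfun : (fun x : ℝ => gpObj (M+1) N W (Function.update pf l x))
        = fun x => (W (M+1) / C ^ N) * (x ^ N)⁻¹ := by
      funext x
      unfold gpObj
      rw [Finset.prod_update_of_mem (Finset.mem_univ l)]
      rw [mul_pow, div_eq_mul_inv, mul_inv, div_eq_mul_inv]
      ring
    have hobjD : HasDerivAt (fun x : ℝ => gpObj (M+1) N W (Function.update pf l x))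
        ((W (M+1) / C ^ N) * (-(N:ℝ) * (a ^ (N+1))⁻¹)) a := by
      rw [hobjfun]
      exact (hasDerivAt_pow_inv N a ha0).const_mul _
    -- per-term derivatives of constraint
    have htermD : ∀ m : Fin (M+1),
        HasDerivAt (fun x : ℝ => Function.update pf l x m * W m.val /
          (∏ k ∈ Finset.Iio m, Function.update pf l x k) ^ N) (d m) a := by
      intro m
      rcases lt_trichotomy m.val l.val with hml | hml | hml
      · -- constant term
        have hne : m ≠ l := Fin.ne_of_val_ne (by omega)
        have hfun : (fun x : ℝ => Function.update pf l x m * W m.val /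
            (∏ k ∈ Finset.Iio m, Function.update pf l x k) ^ N)
            = fun _ => pf m * W m.val / (∏ k ∈ Finset.Iio m, pf k) ^ N := by
          funext x
          have hprod : ∏ k ∈ Finset.Iio m, Function.update pf l x k
              = ∏ k ∈ Finset.Iio m, pf k := by
            apply Finset.prod_congr rfl
            intro k hk
            have hkm : k.val < m.val := Fin.lt_def.mp (Finset.mem_Iio.mp hk)
            exact Function.update_of_ne (Fin.ne_of_val_ne (by omega)) _ _
          rw [Function.update_of_ne hne, hprod]
        rw [hfun]
        have hd0 : d m = 0 := by
          simp only [hd]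
          rw [if_neg hne, if_neg (Nat.lt_asymm hml)]
          ring
        rw [hd0]
        exact hasDerivAt_const _ _
      · -- m = l
        have hme : m = l := Fin.ext hml
        subst hme
        have hIio : ∀ x : ℝ, ∏ k ∈ Finset.Iio m, Function.update pf m x k = q m.val := by
          intro x
          have h1 : ∏ k ∈ Finset.Iio m, Function.update pf m x k
              = ∏ k ∈ Finset.Iio m, pf k :=
            Finset.prod_congr rfl fun k hk =>
              Function.update_of_ne (Finset.mem_Iio.mp hk).ne _ _
          rw [h1, hpf]
          exact prodIioFin m p
        have hfun : (fun x : ℝ => Function.update pf m x m * W m.val /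
            (∏ k ∈ Finset.Iio m, Function.update pf m x k) ^ N)
            = fun x => x * (W m.val / q m.val ^ N) := by
          funext x
          rw [Function.update_self, hIio x, mul_div_assoc]
        rw [hfun]
        have hdm : d m = W m.val / q m.val ^ N := by
          simp [hd, hBldef]
        rw [hdm]
        simpa using (hasDerivAt_id a).mul_const (W m.val / q m.val ^ N)
      · -- l < m
        have hne : m ≠ l := Fin.ne_of_val_ne (by omega)
        have hmem : l ∈ Finset.Iio m := Finset.mem_Iio.mpr (Fin.lt_def.mpr hml)
        set D : ℝ := ∏ k ∈ Finset.Iio m \ {l}, pf k with hDdef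
        have hfun : (fun x : ℝ => Function.update pf l x m * W m.val /
            (∏ k ∈ Finset.Iio m, Function.update pf l x k) ^ N)
            = fun x => (pf m * W m.val / D ^ N) * (x ^ N)⁻¹ := by
          funext x
          rw [Function.update_of_ne hne, Finset.prod_update_of_mem hmem]
          rw [mul_pow, div_eq_mul_inv, mul_inv, div_eq_mul_inv]
          ring
        rw [hfun]
        have base := (hasDerivAt_pow_inv N a ha0).const_mul (pf m * W m.val / D ^ N)
        convert base using 1
        · rfl
        · rfl
        have hDa : D * a = q m.val := by
          rw [hDdef, hadef, hpf, ← Finset.erase_eq]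
          rw [Finset.prod_erase_mul _ _ hmem]
          exact prodIioFin m p
        have hDpos : 0 < D :=
          Finset.prod_pos fun k hk => by rw [hpf]; exact hpos k.val k.isLt
        have hqm : q m.val ≠ 0 := ne_of_gt (hqpos m.val (by omega))
        have hform' := hform m.val m.isLt
        have h1 : W m.val * p m.val = p 0 * r ^ m.val * q m.val ^ N := by
          rw [div_eq_iff (pow_ne_zero _ hqm)] at hform'
          linarith [hform']
        rw [← hDa, mul_pow] at h1
        have hdm : d m = K * r ^ m.val := by
          simp only [hd]
          rw [if_neg hne, if_pos hml]
          ring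
        rw [hdm, hK, hpf]
        have haN1 : a ^ (N+1) ≠ 0 := pow_ne_zero _ ha0
        field_simp
        linear_combination a * h1
    -- sum of derivatives
    have hconstrD : HasDerivAt
        (fun x : ℝ => gpConstr (M+1) N W (Function.update pf l x)) (∑ m, d m) a := by
      have h := HasDerivAt.fun_sum (fun m (_ : m ∈ Finset.univ) => htermD m)
      exact h
    have total := hobjD.add (hconstrD.const_mul lam)
    convert total using 1
    · rfl
    · rfl
    · rfl
    rw [eq_comm]
    -- evaluate the sum
    have hrne : r ≠ 0 := by rw [hr]; positivity
    have hr1 : r - 1 ≠ 0 := by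
      have : r < 1 := by rw [hr, inv_lt_one_iff₀]; right; linarith
      linarith
    have hsum : ∑ m, d m
        = Bl + K * ((r ^ (M+1) - 1)/(r-1) - (r ^ (l.val+1) - 1)/(r-1)) := by
      rw [hd]
      rw [Finset.sum_add_distrib]
      rw [Finset.sum_ite_eq' Finset.univ l (fun _ => Bl)]
      simp only [Finset.mem_univ, if_pos]
      congr 1
      have hstep : ∑ m : Fin (M+1), (if l.val < m.val then K * r ^ m.val else 0)
          = ∑ m ∈ Finset.range (M+1), (if l.val < m then K * r ^ m else 0) :=
        Fin.sum_univ_eq_sum_range (fun m => if l.val < m then K * r ^ m else 0) (M+1)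
      rw [hstep, Finset.sum_ite, Finset.sum_const_zero, add_zero]
      have hfil : Finset.filter (fun m => l.val < m) (Finset.range (M+1))
          = Finset.Ico (l.val+1) (M+1) := by
        ext x
        simp [Finset.mem_Ico]
        omega
      rw [hfil, ← Finset.mul_sum]
      congr 1
      rw [Finset.sum_Ico_eq_sub _ (by omega : l.val + 1 ≤ M + 1)]
      rw [geom_sum_eq (by
        have : r < 1 := by rw [hr, inv_lt_one_iff₀]; right; linarith
        exact ne_of_lt this), geom_sum_eq (by
        have : r < 1 := by rw [hr, inv_lt_one_iff₀]; right; linarith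
        exact ne_of_lt this)]
    rw [hsum]
    -- final algebra
    have hqM1 : q (M+1) ≠ 0 := ne_of_gt (hqpos (M+1) le_rfl)
    have hqM : q M ≠ 0 := ne_of_gt (hqpos M (by omega))
    have hWM : 0 < W M := by
      rcases Nat.eq_zero_or_pos M with h | h
      · subst h; rw [hW0]; norm_num
      · exact hW M h (by omega)
    have hpM : 0 < p M := hpos M (by omega)
    have hql : q l.val ≠ 0 := ne_of_gt (hqpos l.val (by omega))
    have hformM := hform M (by omega)
    have hforml := hform l.val l.isLt
    have hqsucc : q (M+1) = q M * p M := Finset.prod_range_succ p M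
    have hWL : (N:ℝ) * W (M+1) = lam * p 0 * r ^ M * q (M+1) ^ N := by
      rw [hlam, hqsucc]
      rw [div_eq_iff (pow_ne_zero _ hqM)] at hformM
      field_simp
      linear_combination W (M+1) * p M ^ N * hformM
    have hstepA : (W (M+1) / C ^ N) * (-(N:ℝ) * (a ^ (N+1))⁻¹)
        = -(lam * p 0 * r ^ M) / a := by
      have hC0 : C ≠ 0 := ne_of_gt hCpos
      rw [← hCa, mul_pow] at hWL
      field_simp
      linear_combination (-a : ℝ) * hWL
    have hBl' : Bl = p 0 * r ^ l.val / a := by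
      rw [hBldef]
      rw [div_eq_iff (pow_ne_zero _ hql)] at hforml
      field_simp
      linear_combination hforml
    have hrN : r - 1 = -(N:ℝ) * r := by
      rw [hr]
      field_simp
      ring
    have hstepB : (N:ℝ) * ((r ^ (M+1) - 1)/(r-1) - (r ^ (l.val+1) - 1)/(r-1))
        = r ^ l.val - r ^ M := by
      have h1 : (r ^ (M+1) - 1)/(r-1) - (r ^ (l.val+1) - 1)/(r-1)
          = (r ^ (M+1) - r ^ (l.val+1))/(r-1) := by ring
      rw [h1, hrN, pow_succ, pow_succ]
      field_simp
      ring
    rw [hstepA, hBl', hK]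
    have hgoal : -(lam * p 0 * r ^ M) / a + lam * (p 0 * r ^ l.val / a
        + -(N:ℝ) * p 0 / a * ((r ^ (M+1) - 1)/(r-1) - (r ^ (l.val+1) - 1)/(r-1))) = 0 := by
      have hS : ((r ^ (M+1) - 1)/(r-1) - (r ^ (l.val+1) - 1)/(r-1))
          = (r ^ l.val - r ^ M) / (N:ℝ) := by
        rw [eq_div_iff hNne]
        linear_combination hstepB
      rw [hS]
      field_simp
      ring
    exact hgoal
end

section
/- In the KKT system for the geometric program (minimize W_L/(∏_l P_l)^N subject to the energy constraint with equality), the stationarity condition for index l = L yields λ = N W_L / (W_{L−1} P_L^{N+1}), and the stationarity conditions for indices 2 ≤ l ≤ L combined recursively yield P_l = (W_{l−2}/((1+N) W_{l−1})) P_{l−1}^{N+1}. -/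
open Finset

/-- If positive powers `P` and multiplier `λ` satisfy the stationarity
conditions of the Lagrangian `obj + λ·constr` in every coordinate, then
`λ = N W_L / (W_{L-1} P_L^{N+1})` and the recursion
`P_l = (W_{l-2}/((1+N) W_{l-1})) P_{l-1}^{N+1}` holds (0-indexed: for `1 ≤ j ≤ L-1`,
`P j = (W_{j-1}/((1+N) W_j)) (P (j-1))^{N+1}`). -/
theorem stmt13 (L N : ℕ) (hL : 1 ≤ L) (hN : 1 ≤ N) (W : ℕ → ℝ) (hW0 : W 0 = 1)
    (hW : ∀ l, 1 ≤ l → l ≤ L → 0 < W l) (P : Fin L → ℝ) (hP : ∀ l, 0 < P l) (lam : ℝ)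
    (hstat : ∀ l : Fin L,
      HasDerivAt
        (fun x : ℝ =>
          gpObj L N W (Function.update P l x) + lam * gpConstr L N W (Function.update P l x))
        0 (P l)) :
    lam = N * W L / (W (L - 1) * (P ⟨L - 1, Nat.sub_lt hL one_pos⟩) ^ (N + 1)) ∧
      ∀ j : Fin L, ∀ hj : 1 ≤ j.val,
        P j = W (j.val - 1) / ((1 + (N : ℝ)) * W j.val) *
          (P ⟨j.val - 1, lt_trans (Nat.sub_lt hj one_pos) j.isLt⟩) ^ (N + 1) := by
  set Q : Fin L → ℝ := fun m => ∏ k ∈ Iio m, P k with hQdef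
  set S : Fin L → ℝ := fun l => ∑ m ∈ Ioi l, P m * W m.val / Q m ^ N with hSdef
  set Pi : ℝ := ∏ k, P k with hPidef
  have hQpos : ∀ m, 0 < Q m := fun m => Finset.prod_pos (fun k _ => hP k)
  have hPipos : 0 < Pi := Finset.prod_pos (fun k _ => hP k)
  have key : ∀ l : Fin L,
      lam * W l.val * P l / Q l ^ N = N * (W L / Pi ^ N + lam * S l) := by
    intro l
    set x := P l with hxdef
    have hx : x ≠ 0 := (hP l).ne'
    set Cl : ℝ := ∏ k ∈ univ \ {l}, P k with hCldef
    set R : Fin L → ℝ := fun m => ∏ k ∈ (Iio m) \ {l}, P k with hRdef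
    set a : ℝ := W L / Cl ^ N + lam * ∑ m ∈ Ioi l, P m * W m.val / R m ^ N with hadef
    set b : ℝ := lam * (W l.val / Q l ^ N) with hbdef
    set c : ℝ := lam * ∑ m ∈ Iio l, P m * W m.val / Q m ^ N with hcdef
    have hClpos : 0 < Cl := Finset.prod_pos (fun k _ => hP k)
    have hRpos : ∀ m, 0 < R m := fun m => Finset.prod_pos (fun k _ => hP k)
    -- the Lagrangian as a function of the l-th coordinate
    have hfun : ∀ y : ℝ,
        gpObj L N W (Function.update P l y) + lam * gpConstr L N W (Function.update P l y)
          = a / y ^ N + b * y + c := by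
      intro y
      have h1 : ∏ k, Function.update P l y k = y * Cl :=
        Finset.prod_update_of_mem (mem_univ l) _ _
      have huniv : (univ : Finset (Fin L)) = Iio l ∪ Ici l := by
        ext m
        simp only [mem_univ, mem_union, mem_Iio, mem_Ici, true_iff]
        exact lt_or_ge m l
      have hdisj : Disjoint (Iio l) (Ici l) := by
        rw [Finset.disjoint_left]
        intro m hm hm'
        exact absurd (mem_Iio.mp hm) (not_lt.mpr (mem_Ici.mp hm'))
      have hIci : (Ici l) = insert l (Ioi l) := by
        ext m
        simp only [mem_Ici, mem_insert, mem_Ioi]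
        constructor
        · intro h; rcases eq_or_lt_of_le h with h' | h'
          · exact Or.inl h'.symm
          · exact Or.inr h'
        · rintro (rfl | h); · exact le_refl _
          · exact le_of_lt h
      have hsum : ∑ m, Function.update P l y m * W m.val /
            (∏ k ∈ Iio m, Function.update P l y k) ^ N
          = (∑ m ∈ Iio l, P m * W m.val / Q m ^ N) + y * W l.val / Q l ^ N
            + ∑ m ∈ Ioi l, P m * W m.val / (y * R m) ^ N := by
        rw [huniv, Finset.sum_union hdisj, hIci, Finset.sum_insert notMem_Ioi_self]
        have e1 : ∑ m ∈ Iio l, Function.update P l y m * W m.val /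
              (∏ k ∈ Iio m, Function.update P l y k) ^ N
            = ∑ m ∈ Iio l, P m * W m.val / Q m ^ N := by
          refine Finset.sum_congr rfl fun m hm => ?_
          rw [Function.update_of_ne (ne_of_lt (mem_Iio.mp hm))]
          congr 2
          refine Finset.prod_congr rfl fun k hk => ?_
          rw [Function.update_of_ne (ne_of_lt (lt_trans (mem_Iio.mp hk) (mem_Iio.mp hm)))]
        have e2 : Function.update P l y l * W l.val /
              (∏ k ∈ Iio l, Function.update P l y k) ^ N
            = y * W l.val / Q l ^ N := by
          rw [Function.update_self]
          congr 2
          refine Finset.prod_congr rfl fun k hk => ?_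
          rw [Function.update_of_ne (ne_of_lt (mem_Iio.mp hk))]
        have e3 : ∑ m ∈ Ioi l, Function.update P l y m * W m.val /
              (∏ k ∈ Iio m, Function.update P l y k) ^ N
            = ∑ m ∈ Ioi l, P m * W m.val / (y * R m) ^ N := by
          refine Finset.sum_congr rfl fun m hm => ?_
          rw [Function.update_of_ne (ne_of_gt (mem_Ioi.mp hm))]
          congr 2
          exact Finset.prod_update_of_mem (mem_Iio.mpr (mem_Ioi.mp hm)) _ _
        rw [e1, e2, e3]
        ring
      rw [gpObj, gpConstr, h1, hsum]
      have h2 : ∀ m ∈ Ioi l, P m * W m.val / (y * R m) ^ N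
          = (P m * W m.val / R m ^ N) / y ^ N := by
        intro m _
        rw [mul_pow, div_div, mul_comm (y ^ N)]
      rw [Finset.sum_congr rfl h2, ← Finset.sum_div, hadef, add_div, hbdef, hcdef]
      rw [mul_pow]
      field_simp
      ring
    -- derivative of the explicit form
    have hderiv : HasDerivAt (fun y : ℝ => a / y ^ N + b * y + c)
        ((0 * x ^ N - a * ((N : ℝ) * x ^ (N - 1))) / (x ^ N) ^ 2 + b * 1) x := by
      have hda := (hasDerivAt_const x a).div (hasDerivAt_pow N x) (pow_ne_zero N hx)
      have hdb := (hasDerivAt_id x).const_mul b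
      exact (hda.add hdb).add_const c
    have hs : HasDerivAt (fun y : ℝ => a / y ^ N + b * y + c) 0 x :=
      (hstat l).congr_of_eventuallyEq
        (Filter.Eventually.of_forall fun y => (hfun y).symm)
    have h0 : (0 * x ^ N - a * ((N : ℝ) * x ^ (N - 1))) / (x ^ N) ^ 2 + b * 1 = 0 :=
      hderiv.unique hs
    have h2 : a * ((N : ℝ) * x ^ (N - 1)) = b * (x ^ N) ^ 2 := by
      field_simp at h0
      linarith
    have hpw : (x ^ N) ^ 2 = x ^ (N + 1) * x ^ (N - 1) := by
      rw [← pow_mul, ← pow_add]; congr 1; omega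
    have hNA : (N : ℝ) * a = b * x ^ (N + 1) := by
      apply mul_right_cancel₀ (pow_ne_zero (N - 1) hx)
      linear_combination h2 + b * hpw
    -- rewrite a
    have hQm : ∀ m ∈ Ioi l, Q m = x * R m := by
      intro m hm
      simp only [hQdef, hRdef]
      rw [Finset.prod_eq_prod_diff_singleton_mul (mem_Iio.mpr (mem_Ioi.mp hm)) P]
      ring
    have hCl : Pi = x * Cl := by
      rw [hPidef, hCldef, Finset.prod_eq_prod_diff_singleton_mul (mem_univ l) P]
      ring
    have ha : a = (W L / Pi ^ N + lam * S l) * x ^ N := by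
      rw [hadef, hSdef]
      have t1 : W L / Cl ^ N = W L / Pi ^ N * x ^ N := by
        rw [hCl, mul_pow]
        field_simp
      have t2 : ∀ m ∈ Ioi l, P m * W m.val / R m ^ N
          = P m * W m.val / Q m ^ N * x ^ N := by
        intro m hm
        rw [hQm m hm, mul_pow]
        have : R m ≠ 0 := (hRpos m).ne'
        field_simp
      rw [t1, Finset.sum_congr rfl t2, ← Finset.sum_mul]
      ring
    -- conclude
    apply mul_right_cancel₀ (pow_ne_zero N hx)
    have hb : b * x ^ (N + 1) = lam * W l.val * P l / Q l ^ N * x ^ N := by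
      rw [hbdef, ← hxdef, pow_succ]
      ring
    calc lam * W l.val * P l / Q l ^ N * x ^ N = b * x ^ (N + 1) := hb.symm
      _ = (N : ℝ) * a := hNA.symm
      _ = (N : ℝ) * (W L / Pi ^ N + lam * S l) * x ^ N := by rw [ha]; ring
  -- positivity facts
  have hNpos : (0 : ℝ) < N := by exact_mod_cast hN
  have hWL : 0 < W L := hW L hL le_rfl
  have hWL1 : 0 < W (L - 1) := by
    rcases Nat.eq_zero_or_pos (L - 1) with h | h
    · rw [h, hW0]; norm_num
    · exact hW _ h (Nat.sub_le _ _)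
  -- the last index
  set lst : Fin L := ⟨L - 1, Nat.sub_lt hL one_pos⟩ with hlstdef
  have hIoiLst : Ioi lst = (∅ : Finset (Fin L)) := by
    ext m
    simp only [mem_Ioi, notMem_empty, iff_false, Fin.lt_def, hlstdef, Fin.val_mk]
    have := m.isLt
    omega
  have hSlst : S lst = 0 := by rw [hSdef]; simp only; rw [hIoiLst, Finset.sum_empty]
  have hPiQ : Pi = Q lst * P lst := by
    have huniv2 : (univ : Finset (Fin L)) = insert lst (Iio lst) := by
      ext m
      simp only [mem_univ, mem_insert, mem_Iio, true_iff, Fin.lt_def, Fin.ext_iff, hlstdef, Fin.val_mk]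
      have := m.isLt
      omega
    rw [hPidef, huniv2, Finset.prod_insert (by simp), hQdef]
    ring
  have hkey := key lst
  rw [hSlst, hPiQ] at hkey
  have hQl := (hQpos lst).ne'
  have hPl := (hP lst).ne'
  have h3 : lam * (W (L - 1) * P lst ^ (N + 1)) = N * W L := by
    apply mul_right_cancel₀ (pow_ne_zero N hQl)
    field_simp at hkey
    linear_combination hkey
  have hlam : lam = N * W L / (W (L - 1) * P lst ^ (N + 1)) := by
    rw [eq_div_iff (by positivity)]
    linear_combination h3
  have hlam0 : lam ≠ 0 := by
    rw [hlam]
    exact (div_pos (mul_pos hNpos hWL) (mul_pos hWL1 (pow_pos (hP lst) _))).ne'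
  refine ⟨hlam, ?_⟩
  intro j hj
  set l0 : Fin L := ⟨j.val - 1, lt_trans (Nat.sub_lt hj one_pos) j.isLt⟩ with hl0def
  have hIoi : Ioi l0 = insert j (Ioi j) := by
    ext m
    simp only [mem_Ioi, mem_insert, Fin.lt_def, Fin.ext_iff, hl0def]
    omega
  have hSl0 : S l0 = P j * W j.val / Q j ^ N + S j := by
    rw [hSdef]; simp only
    rw [hIoi, Finset.sum_insert notMem_Ioi_self]
  have hQj : Q j = Q l0 * P l0 := by
    have hIio : Iio j = insert l0 (Iio l0) := by
      ext m
      simp only [mem_Iio, mem_insert, Fin.lt_def, Fin.ext_iff, hl0def]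
      omega
    rw [hQdef]; simp only
    rw [hIio, Finset.prod_insert (by simp)]
    ring
  have kA := key l0
  rw [hSl0] at kA
  have kB := key j
  have hdiff : lam * W l0.val * P l0 / Q l0 ^ N
      = (1 + (N : ℝ)) * (lam * W j.val * P j / Q j ^ N) := by
    linear_combination kA - kB
  have hWj : 0 < W j.val := hW _ hj (le_of_lt j.isLt)
  have hQl0 := (hQpos l0).ne'
  have hPl0 := (hP l0).ne'
  rw [hQj] at hdiff
  have h4 : lam * (W (j.val - 1) * P l0 ^ (N + 1))
      = lam * ((1 + (N : ℝ)) * W j.val * P j) := by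
    apply mul_right_cancel₀ (pow_ne_zero N hQl0)
    field_simp at hdiff
    linear_combination lam * hdiff
  have h5 := mul_left_cancel₀ hlam0 h4
  rw [eq_comm, div_mul_eq_mul_div, div_eq_iff (by positivity)]
  linear_combination h5
end
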